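/- arXiv:2305.17536 — 3 statements merged into one kernel-verified Lean document; each statement's English description precedes it below -/
import Mathlib

section
/- Let G and H be connected simple graphs, each having at least two vertices, with chromatic numbers χ(G) = k1 and χ(H) = k2. Then χ_lid(G □ H) ≤ k1·k2 − 1. -/
open SimpleGraph

/-- The closed neighborhood of a vertex: the vertex together with its neighbors. -/
def SimpleGraph.closedNbhd {V : Type*} (G : SimpleGraph V) (v : V) : Set V :=
  insert v (G.neighborSet v)

/-- A coloring `f` is a locally identifying coloring of `G` if it is proper and, for every
edge `uw` whose endpoints have distinct closed neighborhoods, the sets of colors appearing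
on the two closed neighborhoods are distinct. -/
def SimpleGraph.IsLidColoring {V α : Type*} (G : SimpleGraph V) (f : V → α) : Prop :=
  (∀ ⦃u w⦄, G.Adj u w → f u ≠ f w) ∧
  (∀ ⦃u w⦄, G.Adj u w → G.closedNbhd u ≠ G.closedNbhd w →
    f '' G.closedNbhd u ≠ f '' G.closedNbhd w)

/-- `G` admits a locally identifying coloring with `k` colors. -/
def SimpleGraph.LidColorable {V : Type*} (G : SimpleGraph V) (k : ℕ) : Prop :=
  ∃ f : V → Fin k, G.IsLidColoring f

/-- The lid-chromatic number of `G`: the least number of colors in a lid-coloring of `G`. -/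
noncomputable def SimpleGraph.lidChromaticNumber {V : Type*} (G : SimpleGraph V) : ℕ∞ :=
  ⨅ k ∈ {k : ℕ | G.LidColorable k}, (k : ℕ∞)

/-- The tensor (categorical/Kronecker) product of two simple graphs. -/
def SimpleGraph.tensorProd {α β : Type*} (G : SimpleGraph α) (H : SimpleGraph β) :
    SimpleGraph (α × β) where
  Adj x y := G.Adj x.1 y.1 ∧ H.Adj x.2 y.2
  symm := ⟨fun _ _ h => ⟨h.1.symm, h.2.symm⟩⟩
  loopless := ⟨fun x h => G.loopless.irrefl x.1 h.1⟩

/-! Color `(u, v)` by `(c₁ u, c₂ v)` from optimal colorings of `G` and `H`, then recolor the class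
`p = (a, b)` with `q = (a', b')`, where `a ≠ a'` and `b ≠ b'`. Adjacent vertices of `G □ H` get
product colors agreeing in one coordinate, so they are never `p` and `q`, and the coloring stays
proper. For an edge `(u, v)(u', v)` pick a neighbor `w` of `v`: the product color of `(u, w)`
occurs on `N[(u, v)]` but not on `N[(u', v)]`, and symmetrically for `(u', w)`. If the merged color
sets of the two neighborhoods agreed, both colors would have to be `p` or `q`, which is impossible
since they share their second coordinate. -/

open Function Set

section Merge

variable {γ : Type*} [DecidableEq γ] {p q : γ}

theorem eq_or_eq_of_update_id_eq {x y : γ} (h : update id p q x = update id p q y)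
    (hxy : x ≠ y) : x = p ∨ x = q := by
  simp only [update_apply, id] at h
  split_ifs at h <;> tauto

theorem eq_or_eq_of_image_update_id_eq {S T : Set γ}
    (h : update id p q '' S = update id p q '' T) {s : γ} (hS : s ∈ S) (hT : s ∉ T) :
    s = p ∨ s = q := by
  obtain ⟨t, ht, hts⟩ := h ▸ mem_image_of_mem (update id p q) hS
  exact eq_or_eq_of_update_id_eq hts.symm fun hst => hT (hst ▸ ht)

end Merge

theorem Prod.eq_of_eq_or_eq_of_fst_eq_or_snd_eq {A B : Type*} {p q s t : A × B}
    (h₁ : p.1 ≠ q.1) (h₂ : p.2 ≠ q.2) (hs : s = p ∨ s = q) (ht : t = p ∨ t = q)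
    (hst : s.1 = t.1 ∨ s.2 = t.2) : s = t := by
  rcases hs with rfl | rfl <;> rcases ht with rfl | rfl <;> grind

namespace SimpleGraph

theorem isLidColoring_comp_iff {V γ δ : Type*} {G : SimpleGraph V} {f : V → γ} {e : γ → δ}
    (he : Injective e) : G.IsLidColoring (e ∘ f) ↔ G.IsLidColoring f := by
  simp only [IsLidColoring, comp_apply, he.ne_iff, ← image_image, (image_injective.mpr he).ne_iff]

theorem lidChromaticNumber_le_card {V γ : Type*} {G : SimpleGraph V} {f : V → γ}
    (hf : G.IsLidColoring f) (s : Finset γ) (hs : ∀ v, f v ∈ s) :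
    G.lidChromaticNumber ≤ s.card := by
  let e : s ≃ Fin s.card := s.equivFin
  have hfe : (Subtype.val ∘ e.symm) ∘ (fun v => e ⟨f v, hs v⟩) = f := by
    funext v
    simp
  refine iInf₂_le s.card ⟨fun v => e ⟨f v, hs v⟩, ?_⟩
  rw [← isLidColoring_comp_iff (Subtype.val_injective.comp e.symm.injective), hfe]
  exact hf

variable {α β : Type*} {G : SimpleGraph α} {H : SimpleGraph β}

theorem fst_eq_or_snd_eq_of_mem_closedNbhd_boxProd {x z : α × β}
    (hz : z ∈ (G □ H).closedNbhd x) : z.1 = x.1 ∨ z.2 = x.2 := by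
  rcases hz with rfl | hz
  · exact Or.inl rfl
  · rcases hz with ⟨-, h⟩ | ⟨-, h⟩
    · exact Or.inr h.symm
    · exact Or.inl h.symm

theorem mk_notMem_image_prodMap_closedNbhd_boxProd {A B : Type*} (c₁ : α → A) (c₂ : β → B)
    {a u : α} {b v : β} (ha : c₁ a ≠ c₁ u) (hb : c₂ b ≠ c₂ v) :
    (c₁ a, c₂ b) ∉ Prod.map c₁ c₂ '' (G □ H).closedNbhd (u, v) := by
  rintro ⟨⟨z₁, z₂⟩, hz, hza⟩
  obtain ⟨h₁, h₂⟩ := Prod.mk.inj hza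
  rcases fst_eq_or_snd_eq_of_mem_closedNbhd_boxProd hz with rfl | rfl
  · exact ha h₁.symm
  · exact hb h₂.symm

theorem isLidColoring_update_id_comp_prodMap {A B : Type*} [DecidableEq A] [DecidableEq B]
    (c₁ : G.Coloring A) (c₂ : H.Coloring B)
    (hG : ∀ u, ∃ u', G.Adj u u') (hH : ∀ v, ∃ v', H.Adj v v')
    {p q : A × B} (h₁ : p.1 ≠ q.1) (h₂ : p.2 ≠ q.2) :
    (G □ H).IsLidColoring (update id p q ∘ Prod.map c₁ c₂) := by
  set P : α × β → A × B := Prod.map c₁ c₂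
  refine ⟨fun x y hxy heq => ?_, fun x y hxy _ heq => ?_⟩
  · have hP : P x ≠ P y ∧ ((P x).1 = (P y).1 ∨ (P x).2 = (P y).2) := by
      rcases hxy with ⟨h, h'⟩ | ⟨h, h'⟩
      · exact ⟨fun e => c₁.valid h (congrArg Prod.fst e), Or.inr (congrArg c₂ h')⟩
      · exact ⟨fun e => c₂.valid h (congrArg Prod.snd e), Or.inl (congrArg c₁ h')⟩
    exact hP.1 <| Prod.eq_of_eq_or_eq_of_fst_eq_or_snd_eq h₁ h₂
      (eq_or_eq_of_update_id_eq heq hP.1) (eq_or_eq_of_update_id_eq heq.symm hP.1.symm) hP.2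
  · rw [image_comp, image_comp] at heq
    obtain ⟨u, v⟩ := x
    obtain ⟨u', v'⟩ := y
    rcases hxy with ⟨huu', rfl : v = v'⟩ | ⟨hvv', rfl : u = u'⟩
    · obtain ⟨w, hw⟩ := hH v
      have hmem : ∀ {u₀}, P (u₀, w) ∈ P '' (G □ H).closedNbhd (u₀, v) := fun {u₀} =>
        mem_image_of_mem P (mem_insert_of_mem _ (boxProd_adj_right.mpr hw))
      have hs := eq_or_eq_of_image_update_id_eq heq hmem
        (mk_notMem_image_prodMap_closedNbhd_boxProd c₁ c₂ (c₁.valid huu') (c₂.valid hw.symm))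
      have hs' := eq_or_eq_of_image_update_id_eq heq.symm hmem
        (mk_notMem_image_prodMap_closedNbhd_boxProd c₁ c₂ (c₁.valid huu'.symm) (c₂.valid hw.symm))
      exact c₁.valid huu' <| congrArg Prod.fst <|
        Prod.eq_of_eq_or_eq_of_fst_eq_or_snd_eq h₁ h₂ hs hs' (Or.inr rfl)
    · obtain ⟨t, hut⟩ := hG u
      have hmem : ∀ {v₀}, P (t, v₀) ∈ P '' (G □ H).closedNbhd (u, v₀) := fun {v₀} =>
        mem_image_of_mem P (mem_insert_of_mem _ (boxProd_adj_left.mpr hut))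
      have hs := eq_or_eq_of_image_update_id_eq heq hmem
        (mk_notMem_image_prodMap_closedNbhd_boxProd c₁ c₂ (c₁.valid hut.symm) (c₂.valid hvv'))
      have hs' := eq_or_eq_of_image_update_id_eq heq.symm hmem
        (mk_notMem_image_prodMap_closedNbhd_boxProd c₁ c₂ (c₁.valid hut.symm) (c₂.valid hvv'.symm))
      exact c₂.valid hvv' <| congrArg Prod.snd <|
        Prod.eq_of_eq_or_eq_of_fst_eq_or_snd_eq h₁ h₂ hs hs' (Or.inl rfl)

end SimpleGraph

/-- For connected graphs `G` and `H` with at least two vertices each and chromatic numbers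
`k₁` and `k₂`, we have `χ_lid(G □ H) ≤ k₁ · k₂ - 1`. -/
theorem lid_stmt_2 {α β : Type*} [Nontrivial α] [Nontrivial β]
    (G : SimpleGraph α) (H : SimpleGraph β) (hG : G.Connected) (hH : H.Connected)
    (k₁ k₂ : ℕ) (hk₁ : G.chromaticNumber = k₁) (hk₂ : H.chromaticNumber = k₂) :
    (G □ H).lidChromaticNumber ≤ (k₁ * k₂ - 1 : ℕ) := by
  obtain ⟨c₁⟩ := chromaticNumber_le_iff_colorable.mp hk₁.le
  obtain ⟨c₂⟩ := chromaticNumber_le_iff_colorable.mp hk₂.le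
  have hG' := hG.preconnected.exists_adj_of_nontrivial
  have hH' := hH.preconnected.exists_adj_of_nontrivial
  obtain ⟨u, u', hu⟩ : ∃ u u', G.Adj u u' := ⟨_, hG' (Classical.arbitrary α)⟩
  obtain ⟨v, v', hv⟩ : ∃ v v', H.Adj v v' := ⟨_, hH' (Classical.arbitrary β)⟩
  set p := (c₁ u, c₂ v)
  set q := (c₁ u', c₂ v')
  have hlid := isLidColoring_update_id_comp_prodMap c₁ c₂ hG' hH'
    (p := p) (q := q) (c₁.valid hu) (c₂.valid hv)
  have hqp : q ≠ p := fun e => c₁.valid hu (congrArg Prod.fst e).symm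
  have hp : ∀ x, update id p q x ≠ p := fun x => by by_cases hx : x = p <;> simp [hx, hqp]
  convert lidChromaticNumber_le_card hlid (Finset.univ.erase p) (fun x => by simpa using hp _)
  simp
end

section
/- For every pair of even integers m and n with 4 ≤ m ≤ n, the lid-chromatic number of the Cartesian product of the cycles C_m and C_n satisfies χ_lid(C_m □ C_n) = 3. -/
open SimpleGraph

/-! Colour `G □ H` using proper 2-colourings `c` of both factors: a vertex `(a, b)` with
`c a ≠ c b` gets the colour `none`, one with `c a = c b` gets `some (c a)`. Adjacent vertices
lie on opposite sides of this split, so the colouring is proper. All neighbours of a vertex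
`(a, b)` with `c a = c b` are coloured `none`, so its closed neighbourhood sees two colours,
while a vertex with `c a ≠ c b` has neighbours of both kinds `some true` and `some false`
(one in each coordinate direction) and sees all three. Conversely, with at most two colours both
ends of an edge `(a, b) (a, b')` would see every colour, although `(a', b)` tells their closed
neighbourhoods apart. -/

theorem Bool.eq_of_ne_of_ne {a b c : Bool} (hab : a ≠ b) (hbc : b ≠ c) : a = c := by
  revert a b c; decide

theorem Bool.eq_iff_ne_of_ne {a b c : Bool} (hab : a ≠ b) : a = c ↔ b ≠ c := by
  revert a b c; decide

theorem Fin.eq_univ_of_ne_of_mem {k : ℕ} (hk : k ≤ 2) {s : Set (Fin k)} {a b : Fin k} (hab : a ≠ b)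
    (ha : a ∈ s) (hb : b ∈ s) : s = Set.univ := by
  refine Set.eq_univ_of_forall fun c => ?_
  obtain rfl | rfl : c = a ∨ c = b := by simp only [Fin.ext_iff] at hab ⊢; omega
  exacts [ha, hb]

namespace SimpleGraph

variable {V α β γ δ : Type*}

theorem self_mem_closedNbhd (G : SimpleGraph V) (v : V) : v ∈ G.closedNbhd v :=
  Set.mem_insert v _

theorem mem_closedNbhd_of_adj {G : SimpleGraph V} {v w : V} (h : G.Adj v w) : w ∈ G.closedNbhd v :=
  Set.mem_insert_of_mem v h

theorem IsLidColoring.comp {G : SimpleGraph V} {f : V → γ} (hf : G.IsLidColoring f) {e : γ → δ}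
    (he : Function.Injective e) : G.IsLidColoring (e ∘ f) := by
  refine ⟨fun u w h => he.ne (hf.1 h), fun u w h hN => ?_⟩
  rw [Set.image_comp, Set.image_comp]
  exact (Set.image_injective.mpr he).ne (hf.2 h hN)

theorem LidColorable.of_isLidColoring [Fintype γ] {G : SimpleGraph V} {f : V → γ}
    (hf : G.IsLidColoring f) : G.LidColorable (Fintype.card γ) :=
  ⟨_, hf.comp (Fintype.equivFin γ).injective⟩

theorem lidChromaticNumber_le {G : SimpleGraph V} {k : ℕ} (h : G.LidColorable k) :
    G.lidChromaticNumber ≤ k :=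
  iInf₂_le k h

theorem le_lidChromaticNumber {G : SimpleGraph V} {k : ℕ} (h : ∀ j, G.LidColorable j → k ≤ j) :
    k ≤ G.lidChromaticNumber :=
  le_iInf₂ fun j hj => by exact_mod_cast h j hj

theorem LidColorable.three_le {G : SimpleGraph V} {k : ℕ} (hk : G.LidColorable k) {u w : V}
    (h : G.Adj u w) (hN : G.closedNbhd u ≠ G.closedNbhd w) : 3 ≤ k := by
  obtain ⟨f, hproper, hlid⟩ := hk
  by_contra! hk
  have image_eq_univ {x : V} (hu : u ∈ G.closedNbhd x) (hw : w ∈ G.closedNbhd x) :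
      f '' G.closedNbhd x = Set.univ :=
    Fin.eq_univ_of_ne_of_mem (by omega) (hproper h) (Set.mem_image_of_mem f hu)
      (Set.mem_image_of_mem f hw)
  exact hlid h hN <| (image_eq_univ (G.self_mem_closedNbhd u) (mem_closedNbhd_of_adj h)).trans
    (image_eq_univ (mem_closedNbhd_of_adj h.symm) (G.self_mem_closedNbhd w)).symm

theorem boxProd_closedNbhd_ne {G : SimpleGraph α} {H : SimpleGraph β} {a a' : α} {b b' : β}
    (ha : G.Adj a a') (hb : H.Adj b b') :
    (G □ H).closedNbhd (a, b) ≠ (G □ H).closedNbhd (a, b') := by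
  intro hN
  have : (a', b) ∈ (G □ H).closedNbhd (a, b') :=
    hN ▸ mem_closedNbhd_of_adj (boxProd_adj.mpr (Or.inl ⟨ha, rfl⟩))
  rcases this with h | h | h
  · exact ha.ne (congrArg Prod.fst h).symm
  · exact hb.ne h.2.symm
  · exact ha.ne h.2

section BoxProdBipartite

variable {G : SimpleGraph α} {H : SimpleGraph β} (cG : G.Coloring Bool) (cH : H.Coloring Bool)

def boxProdLidColoring (x : α × β) : Option Bool :=
  if cG x.1 = cH x.2 then some (cG x.1) else none

theorem boxProd_adj_coloring_eq_iff_ne {x y : α × β} (h : (G □ H).Adj x y) :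
    cG x.1 = cH x.2 ↔ cG y.1 ≠ cH y.2 := by
  rcases boxProd_adj.mp h with ⟨hG, hH⟩ | ⟨hH, hG⟩
  · rw [hH, Bool.eq_iff_ne_of_ne (cG.valid hG)]
  · rw [hG, eq_comm, Bool.eq_iff_ne_of_ne (cH.valid hH), ne_comm]

theorem image_boxProdLidColoring_closedNbhd_subset {x : α × β} (hx : cG x.1 = cH x.2) :
    boxProdLidColoring cG cH '' (G □ H).closedNbhd x ⊆ {some (cG x.1), none} := by
  rintro _ ⟨y, rfl | hy, rfl⟩
  · simp [boxProdLidColoring, hx]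
  · simp [boxProdLidColoring, (boxProd_adj_coloring_eq_iff_ne cG cH hy).mp hx]

theorem some_mem_image_boxProdLidColoring_closedNbhd (hG : ∀ a, ∃ a', G.Adj a a')
    (hH : ∀ b, ∃ b', H.Adj b b') {y : α × β} (hy : cG y.1 ≠ cH y.2) (c : Bool) :
    some c ∈ boxProdLidColoring cG cH '' (G □ H).closedNbhd y := by
  obtain ⟨a', ha'⟩ := hG y.1
  obtain ⟨b', hb'⟩ := hH y.2
  have h₁ := cG.valid ha'
  have h₂ := cH.valid hb'
  rcases Bool.eq_or_eq_not c (cG y.1) with rfl | rfl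
  · refine ⟨(y.1, b'), mem_closedNbhd_of_adj (boxProd_adj.mpr (Or.inr ⟨hb', rfl⟩)), ?_⟩
    simp only [boxProdLidColoring, if_pos (Bool.eq_of_ne_of_ne hy h₂)]
  · refine ⟨(a', y.2), mem_closedNbhd_of_adj (boxProd_adj.mpr (Or.inl ⟨ha', rfl⟩)), ?_⟩
    simp only [boxProdLidColoring]
    rw [if_pos (Bool.eq_of_ne_of_ne h₁.symm hy), Bool.eq_not_iff.mpr h₁.symm]

theorem isLidColoring_boxProdLidColoring (hG : ∀ a, ∃ a', G.Adj a a')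
    (hH : ∀ b, ∃ b', H.Adj b b') : (G □ H).IsLidColoring (boxProdLidColoring cG cH) := by
  have separates {x y : α × β} (h : (G □ H).Adj x y) (hx : cG x.1 = cH x.2) :
      boxProdLidColoring cG cH '' (G □ H).closedNbhd x ≠
        boxProdLidColoring cG cH '' (G □ H).closedNbhd y := by
    intro hN
    have hy := (boxProd_adj_coloring_eq_iff_ne cG cH h).mp hx
    have := image_boxProdLidColoring_closedNbhd_subset cG cH hx
      (hN ▸ some_mem_image_boxProdLidColoring_closedNbhd cG cH hG hH hy (!cG x.1))
    simp at this
  refine ⟨fun x y h => ?_, fun x y h _ => ?_⟩ <;> by_cases hx : cG x.1 = cH x.2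
  · simp [boxProdLidColoring, hx, (boxProd_adj_coloring_eq_iff_ne cG cH h).mp hx]
  · simp [boxProdLidColoring, hx, (boxProd_adj_coloring_eq_iff_ne cG cH h.symm).mpr hx]
  · exact separates h hx
  · exact (separates h.symm ((boxProd_adj_coloring_eq_iff_ne cG cH h.symm).mpr hx)).symm

end BoxProdBipartite

theorem lidChromaticNumber_boxProd_eq_three {G : SimpleGraph α} {H : SimpleGraph β}
    [Nonempty α] [Nonempty β] (cG : G.Coloring Bool)
    (cH : H.Coloring Bool) (hG : ∀ a, ∃ a', G.Adj a a') (hH : ∀ b, ∃ b', H.Adj b b') :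
    (G □ H).lidChromaticNumber = 3 := by
  obtain ⟨a', ha⟩ := hG (Classical.arbitrary α)
  obtain ⟨b', hb⟩ := hH (Classical.arbitrary β)
  refine le_antisymm ?_ (le_lidChromaticNumber fun k hk =>
    hk.three_le (u := (_, _)) (w := (_, _)) (boxProd_adj.mpr (Or.inr ⟨hb, rfl⟩))
      (boxProd_closedNbhd_ne ha hb))
  simpa using lidChromaticNumber_le
    (LidColorable.of_isLidColoring (isLidColoring_boxProdLidColoring cG cH hG hH))

theorem cycleGraph_exists_adj {n : ℕ} (hn : 2 ≤ n) (v : Fin n) : ∃ w, (cycleGraph n).Adj v w := by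
  obtain ⟨k, rfl⟩ := Nat.exists_eq_add_of_le' hn
  exact ⟨v + 1, cycleGraph_adj.mpr (Or.inr (add_sub_cancel_left v 1))⟩

end SimpleGraph

/-- For even `m`, `n` with `4 ≤ m ≤ n`, `χ_lid(C_m □ C_n) = 3`. -/
theorem lid_stmt_5 (m n : ℕ) (hm : Even m) (hn : Even n) (h4 : 4 ≤ m) (hmn : m ≤ n) :
    (cycleGraph m □ cycleGraph n).lidChromaticNumber = 3 := by
  have : NeZero m := ⟨by omega⟩
  have : NeZero n := ⟨by omega⟩
  exact lidChromaticNumber_boxProd_eq_three (cycleGraph.bicoloring_of_even m hm)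
    (cycleGraph.bicoloring_of_even n hn) (cycleGraph_exists_adj (by omega))
    (cycleGraph_exists_adj (by omega))
end

section
/- For every odd integer n ≥ 5, the lid-chromatic number of the Cartesian product of the cycles C_5 and C_n satisfies χ_lid(C_5 □ C_n) = 4. -/
open SimpleGraph

/-!
Lower bound: if `f` uses at most three colours and `uw` is an edge, the colour set of either
closed neighbourhood contains the two distinct colours `f u`, `f w`, so it is either all colours
or exactly `{f u, f w}`. Hence along an edge whose ends have different closed neighbourhoods
exactly one end sees every colour, which would properly 2-colour a `C_5`-fibre of `C_5 □ C_n`.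

Upper bound: colour the columns of `C_5 □ C_n` by five fixed patterns on `C_5`, in the cyclic
order `E D C (B A)^((n-3)/2)`. Whether an edge is well coloured depends only on four consecutive
columns; away from `E D C` the sequence is 2-periodic, so only finitely many windows of four
columns occur, and each is checked by computation.
-/

lemma Set.eq_pair_of_ne_univ {α : Type*} [Finite α] (hα : Nat.card α ≤ 3) {X : Set α}
    {a b : α} (ha : a ∈ X) (hb : b ∈ X) (hab : a ≠ b) (hX : X ≠ Set.univ) :
    X = {a, b} := by
  refine (Set.eq_of_subset_of_ncard_le (Set.pair_subset ha hb) ?_).symm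
  have := Set.ncard_lt_ncard (Set.ssubset_univ_iff.mpr hX)
  rw [Set.ncard_univ] at this
  rw [Set.ncard_pair hab]
  omega

namespace SimpleGraph

variable {V W α : Type*} {G : SimpleGraph V} {H : SimpleGraph W}

lemma lidChromaticNumber_eq {k : ℕ} (hk : G.LidColorable k)
    (hlt : ∀ j < k, ¬ G.LidColorable j) : G.lidChromaticNumber = k :=
  le_antisymm (iInf₂_le k hk) (le_iInf₂ fun j hj => by exact_mod_cast not_lt.mp (hlt j · hj))

/-- `G` without the edges between true twins. -/
def nonTwinGraph (G : SimpleGraph V) : SimpleGraph V where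
  Adj u w := G.Adj u w ∧ G.closedNbhd u ≠ G.closedNbhd w
  symm := ⟨fun _ _ h => ⟨h.1.symm, h.2.symm⟩⟩
  loopless := ⟨fun v h => G.loopless.irrefl v h.1⟩

lemma IsLidColoring.image_closedNbhd_eq_univ_iff [Finite α] (hα : Nat.card α ≤ 3)
    {f : V → α} (hf : G.IsLidColoring f) {u w : V} (h : G.nonTwinGraph.Adj u w) :
    f '' G.closedNbhd u = Set.univ ↔ f '' G.closedNbhd w ≠ Set.univ := by
  obtain ⟨hadj, hN⟩ := h
  have hne := hf.2 hadj hN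
  have mem_self v : f v ∈ f '' G.closedNbhd v := Set.mem_image_of_mem f (Set.mem_insert v _)
  have mem_adj {v v'} (hvv' : G.Adj v v') : f v' ∈ f '' G.closedNbhd v :=
    Set.mem_image_of_mem f (Set.mem_insert_of_mem v hvv')
  refine ⟨fun hu hw => hne (hu.trans hw.symm), fun hw => ?_⟩
  by_contra hu
  exact hne ((Set.eq_pair_of_ne_univ hα (mem_self u) (mem_adj hadj) (hf.1 hadj) hu).trans
    (Set.eq_pair_of_ne_univ hα (mem_adj hadj.symm) (mem_self w) (hf.1 hadj) hw).symm)

lemma IsLidColoring.colorable_nonTwinGraph [Finite α] (hα : Nat.card α ≤ 3) {f : V → α}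
    (hf : G.IsLidColoring f) : G.nonTwinGraph.Colorable 2 := by
  classical
  refine (Coloring.mk (fun v => decide (f '' G.closedNbhd v = Set.univ)) fun h => ?_).colorable
  have := hf.image_closedNbhd_eq_univ_iff hα h
  simp only [ne_eq, decide_eq_decide]
  tauto

lemma closedNbhd_boxProd_ne {a a' : V} {b b' : W} (ha : G.Adj a a') (hb : H.Adj b b') :
    (G □ H).closedNbhd (a, b) ≠ (G □ H).closedNbhd (a', b) := by
  intro h
  have hmem : (a, b') ∈ (G □ H).closedNbhd (a', b) :=
    h ▸ Set.mem_insert_of_mem _ (boxProd_adj_right.mpr hb)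
  simp only [closedNbhd, Set.mem_insert_iff, mem_neighborSet, boxProd_adj, Prod.mk.injEq] at hmem
  rcases hmem with ⟨h, -⟩ | ⟨-, h⟩ | ⟨-, h⟩
  exacts [G.ne_of_adj ha h, H.ne_of_adj hb h, G.ne_of_adj ha h.symm]

def boxProdLeftNonTwin {b b' : W} (hb : H.Adj b b') : G →g (G □ H).nonTwinGraph where
  toFun a := (a, b)
  map_rel' ha := ⟨boxProd_adj_left.mpr ha, closedNbhd_boxProd_ne ha hb⟩

theorem not_isLidColoring_boxProd [Finite α] (hα : Nat.card α ≤ 3) (hG : ¬ G.Colorable 2)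
    {b b' : W} (hb : H.Adj b b') (f : V × W → α) : ¬ (G □ H).IsLidColoring f :=
  fun hf => hG ((hf.colorable_nonTwinGraph hα).of_hom (boxProdLeftNonTwin hb))

lemma not_colorable_two_cycleGraph_of_odd {n : ℕ} (hn : Odd n) (h3 : 3 ≤ n) :
    ¬ (cycleGraph n).Colorable 2 := fun h => by
  have := h.chromaticNumber_le
  rw [chromaticNumber_cycleGraph_of_odd n (by omega) hn] at this
  norm_num at this

lemma cycleGraph_adj_iff_eq_add_one {n : ℕ} {u v : Fin (n + 2)} :
    (cycleGraph (n + 2)).Adj u v ↔ v = u + 1 ∨ u = v + 1 := by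
  rw [cycleGraph_adj, sub_eq_iff_eq_add, sub_eq_iff_eq_add, add_comm 1 v, add_comm 1 u, or_comm]

end SimpleGraph

namespace CycleBoxCycle

variable {α : Type*} [DecidableEq α] {p q : ℕ}

/-- The colours of the closed neighbourhood of the vertex in row `i` of a column coloured `b`
of `C_{p+2} □ C_{q+2}`, when the two neighbouring columns are coloured `a` and `c`. -/
def nbhdColors (a b c : Fin (p + 2) → α) (i : Fin (p + 2)) : Finset α :=
  {b i, b (i - 1), b (i + 1), a i, c i}

/-- For four consecutive columns: the edges inside column `b` and the edges between columns `b`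
and `c` are coloured properly and separate the colour sets of closed neighbourhoods. -/
def GoodWindow (a b c d : Fin (p + 2) → α) : Prop :=
  ∀ i, b i ≠ b (i + 1) ∧ nbhdColors a b c i ≠ nbhdColors a b c (i + 1) ∧
    b i ≠ c i ∧ nbhdColors a b c i ≠ nbhdColors b c d i

instance (a b c d : Fin (p + 2) → α) : Decidable (GoodWindow a b c d) := by
  unfold GoodWindow; infer_instance

lemma closedNbhd_cycleGraph_boxProd (i : Fin (p + 2)) (j : Fin (q + 2)) :
    (cycleGraph (p + 2) □ cycleGraph (q + 2)).closedNbhd (i, j) =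
      {(i, j), (i - 1, j), (i + 1, j), (i, j - 1), (i, j + 1)} := by
  ext ⟨a, b⟩
  simp only [closedNbhd, neighborSet_boxProd, cycleGraph_neighborSet, Set.mem_insert_iff,
    Set.mem_union, Set.mem_prod, Set.mem_singleton_iff, Prod.mk.injEq]
  tauto

lemma image_closedNbhd_cycleGraph_boxProd (col : Fin (q + 2) → Fin (p + 2) → α)
    (i : Fin (p + 2)) (j : Fin (q + 2)) :
    (fun v => col v.2 v.1) '' (cycleGraph (p + 2) □ cycleGraph (q + 2)).closedNbhd (i, j) =
      nbhdColors (col (j - 1)) (col j) (col (j + 1)) i := by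
  rw [closedNbhd_cycleGraph_boxProd]
  simp [Set.image_insert_eq, nbhdColors]

theorem isLidColoring_of_goodWindow (col : Fin (q + 2) → Fin (p + 2) → α)
    (h : ∀ j, GoodWindow (col (j - 1)) (col j) (col (j + 1)) (col (j + 2))) :
    (cycleGraph (p + 2) □ cycleGraph (q + 2)).IsLidColoring (fun v => col v.2 v.1) := by
  set G := cycleGraph (p + 2) □ cycleGraph (q + 2)
  set f : Fin (p + 2) × Fin (q + 2) → α := fun v => col v.2 v.1
  let Separated u w := f u ≠ f w ∧ f '' G.closedNbhd u ≠ f '' G.closedNbhd w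
  have symm u w : Separated u w → Separated w u := fun h => ⟨h.1.symm, h.2.symm⟩
  have vert i j : Separated (i, j) (i + 1, j) := by
    obtain ⟨hc, hN, -, -⟩ := h j i
    refine ⟨hc, ?_⟩
    rw [image_closedNbhd_cycleGraph_boxProd, image_closedNbhd_cycleGraph_boxProd]
    exact_mod_cast hN
  have horiz i j : Separated (i, j) (i, j + 1) := by
    obtain ⟨-, -, hc, hN⟩ := h j i
    refine ⟨hc, ?_⟩
    rw [image_closedNbhd_cycleGraph_boxProd, image_closedNbhd_cycleGraph_boxProd,
      add_sub_cancel_right, show j + 1 + 1 = j + 2 by grind]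
    exact_mod_cast hN
  have edge u w (hadj : G.Adj u w) : Separated u w := by
    obtain ⟨i, j⟩ := u
    obtain ⟨i', j'⟩ := w
    simp only [G, boxProd_adj, cycleGraph_adj_iff_eq_add_one] at hadj
    rcases hadj with ⟨rfl | rfl, rfl⟩ | ⟨rfl | rfl, rfl⟩
    exacts [vert i j, symm _ _ (vert i' j), horiz i j, symm _ _ (horiz i j')]
  exact ⟨fun u w h => (edge u w h).1, fun u w h _ => (edge u w h).2⟩

/-- The patterns `E`, `D`, `C` for `k = 0, 1, 2`, then `B` for odd and `A` for even `k`. -/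
def lidColumn (k : ℕ) : Fin 5 → Fin 4 :=
  if k = 0 then ![1, 0, 2, 0, 2] else if k = 1 then ![2, 3, 0, 1, 3]
  else if k = 2 then ![0, 2, 1, 0, 1] else if k % 2 = 0 then ![0, 1, 0, 2, 3]
  else ![2, 3, 2, 1, 0]

lemma lidColumn_congr {k l : ℕ} (h : k = l ∨ 3 ≤ k ∧ 3 ≤ l ∧ k % 2 = l % 2) :
    lidColumn k = lidColumn l := by
  obtain rfl | ⟨hk, hl, h⟩ := h
  · rfl
  simp only [lidColumn, h, show k ≠ 0 by omega, show k ≠ 1 by omega, show k ≠ 2 by omega,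
    show l ≠ 0 by omega, show l ≠ 1 by omega, show l ≠ 2 by omega, if_false]

lemma goodWindow_lidColumn_of_pos {j : ℕ} (hj : 1 ≤ j) :
    GoodWindow (lidColumn (j - 1)) (lidColumn j) (lidColumn (j + 1)) (lidColumn (j + 2)) := by
  obtain hj4 | hj4 := lt_or_ge j 4
  · interval_cases j <;> decide
  obtain hj | hj := Nat.mod_two_eq_zero_or_one j
  · convert (by decide : GoodWindow (lidColumn 3) (lidColumn 4) (lidColumn 5) (lidColumn 6))
      using 1 <;> apply lidColumn_congr <;> omega
  · convert (by decide : GoodWindow (lidColumn 4) (lidColumn 5) (lidColumn 6) (lidColumn 7))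
      using 1 <;> apply lidColumn_congr <;> omega

lemma goodWindow_lidColumn {m : ℕ} (hm : Odd m) (hm3 : 3 ≤ m) (j : Fin (m + 2)) :
    GoodWindow (lidColumn (j - 1).val) (lidColumn j.val) (lidColumn (j + 1).val)
      (lidColumn (j + 2).val) := by
  have hm2 : m % 2 = 1 := Nat.odd_iff.mp hm
  obtain rfl | hm5 := (by omega : m = 3 ∨ 5 ≤ m)
  · revert j; decide
  have wrap (a : ℕ) (h₁ : m + 2 ≤ a) (h₂ : a < 2 * (m + 2)) :
      a % (m + 2) = a - (m + 2) := by
    rw [Nat.mod_eq_sub_mod h₁, Nat.mod_eq_of_lt (by omega)]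
  have two : ((2 : Fin (m + 2)) : ℕ) = 2 := by simp; omega
  obtain ⟨k, hk⟩ := j
  simp only [Fin.val_sub, Fin.val_add, Fin.val_one, two]
  -- only the windows at `k = 0`, `m`, `m + 1` wrap around the cycle
  rcases (by omega : k = 0 ∨ (1 ≤ k ∧ k < m) ∨ k = m ∨ k = m + 1) with
    rfl | ⟨h1, h2⟩ | rfl | rfl <;> simp (disch := omega) only [Nat.mod_eq_of_lt, wrap]
  · convert (by decide : GoodWindow (lidColumn 4) (lidColumn 0) (lidColumn 1) (lidColumn 2))
      using 1
    apply lidColumn_congr; omega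
  · convert goodWindow_lidColumn_of_pos h1 using 1
    apply lidColumn_congr; omega
  · convert (by decide : GoodWindow (lidColumn 4) (lidColumn 3) (lidColumn 4) (lidColumn 0))
      using 1 <;> apply lidColumn_congr <;> omega
  · convert (by decide : GoodWindow (lidColumn 3) (lidColumn 4) (lidColumn 0) (lidColumn 1))
      using 1 <;> apply lidColumn_congr <;> omega

end CycleBoxCycle

/-- For every odd `n ≥ 5`, `χ_lid(C_5 □ C_n) = 4`. -/
theorem lid_stmt_9 (n : ℕ) (hn : Odd n) (hn5 : 5 ≤ n) :
    (cycleGraph 5 □ cycleGraph n).lidChromaticNumber = 4 := by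
  obtain ⟨m, rfl⟩ : ∃ m, n = m + 2 := ⟨n - 2, by omega⟩
  have hm : Odd m := by simpa [Nat.odd_add] using hn
  have upper : (cycleGraph 5 □ cycleGraph (m + 2)).LidColorable 4 :=
    ⟨_, CycleBoxCycle.isLidColoring_of_goodWindow (fun j => CycleBoxCycle.lidColumn j.val)
      (CycleBoxCycle.goodWindow_lidColumn hm (by omega))⟩
  have h01 : (cycleGraph (m + 2)).Adj 0 1 :=
    cycleGraph_adj_iff_eq_add_one.mpr (.inl (zero_add 1).symm)
  refine lidChromaticNumber_eq (k := 4) upper fun k hk ⟨f, hf⟩ => ?_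
  exact not_isLidColoring_boxProd (by simp; omega)
    (not_colorable_two_cycleGraph_of_odd (n := 5) (by decide) (by norm_num)) h01 f hf
end
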